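/- Let ρ0, ρ1 be positive definite density matrices on ℂ^D. Then there exists an orthonormal basis v_1,…,v_D of ℂ^D such that Σ_{b=1}^D √(Re ⟨v_b, ρ0 v_b⟩) · √(Re ⟨v_b, ρ1 v_b⟩) = tr √(ρ1^{1/2} ρ0 ρ1^{1/2}). In other words, the lower bound tr √(ρ1^{1/2} ρ0 ρ1^{1/2}) on the statistical overlap is achieved by an orthogonal projection-valued measurement, namely the one onto an eigenbasis of M = ρ1^{-1/2} √(ρ1^{1/2} ρ0 ρ1^{1/2}) ρ1^{-1/2}. -/

import Mathlib

open Matrix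
open scoped ComplexOrder

open scoped MatrixOrder in
/-- Port helper: the positive semidefinite square root of a positive semidefinite matrix
(formerly Mathlib's `Matrix.PosSemidef.sqrt`, now expressed via `CFC.sqrt`). -/
noncomputable def Matrix.PosSemidef.sqrt {n : Type*} [Fintype n] [DecidableEq n]
    {A : Matrix n n ℂ} (_hA : A.PosSemidef) : Matrix n n ℂ :=
  CFC.sqrt A

open scoped MatrixOrder in
theorem Matrix.PosSemidef.posSemidef_sqrt {n : Type*} [Fintype n] [DecidableEq n]
    {A : Matrix n n ℂ} (hA : A.PosSemidef) : hA.sqrt.PosSemidef :=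
  Matrix.nonneg_iff_posSemidef.mp (CFC.sqrt_nonneg A)

/-- The sandwiched matrix `ρ1^{1/2} ρ0 ρ1^{1/2}` is positive semidefinite. -/
noncomputable def sandwichPosSemidef {D : ℕ} {ρ0 ρ1 : Matrix (Fin D) (Fin D) ℂ}
    (hρ0 : ρ0.PosSemidef) (hρ1 : ρ1.PosSemidef) :
    (hρ1.sqrt * ρ0 * hρ1.sqrt).PosSemidef := by
  have h := hρ0.mul_mul_conjTranspose_same hρ1.sqrt
  rwa [hρ1.posSemidef_sqrt.isHermitian.eq] at h

/-! With `R = ρ1^{1/2}` and `T = √(R ρ0 R)`, the positive semidefinite matrix `M = R⁻¹ T R⁻¹`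
satisfies `M ρ1 M = ρ0` and `tr (ρ1 M) = tr T`. For an eigenvector `v` of `M` with eigenvalue
`λ ≥ 0` this gives `⟨v, ρ0 v⟩ = λ² ⟨v, ρ1 v⟩`, so the corresponding summand is
`λ ⟨v, ρ1 v⟩ = ⟨v, ρ1 M v⟩`; summed over an orthonormal eigenbasis of `M` it is `tr (ρ1 M)`. -/

open scoped MatrixOrder in
theorem Matrix.PosSemidef.sqrt_mul_sqrt {n : Type*} [Fintype n] [DecidableEq n]
    {A : Matrix n n ℂ} (hA : A.PosSemidef) : hA.sqrt * hA.sqrt = A :=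
  CFC.sqrt_mul_sqrt_self A (Matrix.nonneg_iff_posSemidef.mpr hA)

open scoped MatrixOrder in
theorem Matrix.PosDef.isUnit_sqrt {n : Type*} [Fintype n] [DecidableEq n]
    {A : Matrix n n ℂ} (hA : A.PosDef) : IsUnit hA.posSemidef.sqrt :=
  CFC.isUnit_sqrt_iff_isStrictlyPositive.mpr hA.isStrictlyPositive

theorem OrthonormalBasis.sum_star_dotProduct_mulVec {n ι : Type*} [Fintype n] [DecidableEq n]
    [Fintype ι] (b : OrthonormalBasis ι ℂ (EuclideanSpace ℂ n)) (A : Matrix n n ℂ) :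
    ∑ i, star (b i).ofLp ⬝ᵥ A *ᵥ (b i).ofLp = A.trace := by
  have hA : LinearMap.trace ℂ _ (toLpLin 2 2 A) = A.trace := by
    rw [LinearMap.trace_eq_matrix_trace ℂ (EuclideanSpace.basisFun n ℂ).toBasis]
    congr 1
    ext i j
    simp [LinearMap.toMatrix_apply, toLpLin_apply]
  rw [← hA, LinearMap.trace_eq_sum_inner _ b]
  simp [EuclideanSpace.inner_eq_star_dotProduct, toLpLin_apply, dotProduct_comm]

theorem OrthonormalBasis.star_dotProduct_eq_ite {n ι 𝕜 : Type*} [Fintype n] [Fintype ι]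
    [DecidableEq ι] [RCLike 𝕜] (b : OrthonormalBasis ι 𝕜 (EuclideanSpace 𝕜 n)) (i j : ι) :
    star (b i).ofLp ⬝ᵥ (b j).ofLp = if i = j then 1 else 0 := by
  rw [← orthonormal_iff_ite.mp b.orthonormal i j, EuclideanSpace.inner_eq_star_dotProduct,
    dotProduct_comm]

namespace Matrix

section Congruence

variable {n α : Type*} [Fintype n] [DecidableEq n] [CommRing α] {R T A : Matrix n n α}

theorem inv_mul_mul_inv_mul_mul_self_mul_inv_mul_mul_inv (hR : IsUnit R.det)
    (hT : T * T = R * A * R) : R⁻¹ * T * R⁻¹ * (R * R) * (R⁻¹ * T * R⁻¹) = A :=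
  calc R⁻¹ * T * R⁻¹ * (R * R) * (R⁻¹ * T * R⁻¹) = R⁻¹ * (T * T) * R⁻¹ := by
        simp only [Matrix.mul_assoc, nonsing_inv_mul_cancel_left _ _ hR,
          mul_nonsing_inv_cancel_left _ _ hR]
    _ = A := by
        rw [hT]
        simp only [Matrix.mul_assoc, nonsing_inv_mul_cancel_left _ _ hR, mul_nonsing_inv _ hR,
          Matrix.mul_one]

theorem trace_mul_self_mul_inv_mul_mul_inv (hR : IsUnit R.det) :
    (R * R * (R⁻¹ * T * R⁻¹)).trace = T.trace := by
  simp only [Matrix.mul_assoc, mul_nonsing_inv_cancel_left _ _ hR]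
  rw [trace_mul_comm, nonsing_inv_mul_cancel_right _ _ hR]

end Congruence

theorem PosDef.exists_posSemidef_mul_mul_eq {n : Type*} [Fintype n] [DecidableEq n]
    {A B : Matrix n n ℂ} (hB : B.PosDef)
    (hS : (hB.posSemidef.sqrt * A * hB.posSemidef.sqrt).PosSemidef) :
    ∃ M : Matrix n n ℂ, M.PosSemidef ∧ M * B * M = A ∧ (B * M).trace = hS.sqrt.trace := by
  set R := hB.posSemidef.sqrt
  have hR : IsUnit R.det := (isUnit_iff_isUnit_det R).mp hB.isUnit_sqrt
  have hRR : R * R = B := hB.posSemidef.sqrt_mul_sqrt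
  have hRinv : (R⁻¹)ᴴ = R⁻¹ := hB.posSemidef.posSemidef_sqrt.isHermitian.inv
  refine ⟨R⁻¹ * hS.sqrt * R⁻¹, ?_, ?_, ?_⟩
  · simpa only [hRinv] using hS.posSemidef_sqrt.mul_mul_conjTranspose_same R⁻¹
  · rw [← hRR]
    exact inv_mul_mul_inv_mul_mul_self_mul_inv_mul_mul_inv hR hS.sqrt_mul_sqrt
  · calc (B * (R⁻¹ * hS.sqrt * R⁻¹)).trace = (R * R * (R⁻¹ * hS.sqrt * R⁻¹)).trace := by
          rw [hRR]
      _ = hS.sqrt.trace := trace_mul_self_mul_inv_mul_mul_inv hR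

section Eigenvector

variable {n : Type*} [Fintype n] {M A : Matrix n n ℂ} {v : n → ℂ} {c : ℝ}

theorem dotProduct_mul_mulVec_of_mulVec_eq_smul (hv : M *ᵥ v = c • v) :
    star v ⬝ᵥ (A * M) *ᵥ v = c * (star v ⬝ᵥ A *ᵥ v) := by
  rw [← mulVec_mulVec, hv, mulVec_smul, dotProduct_smul, Complex.real_smul]

theorem IsHermitian.star_vecMul_of_mulVec_eq_smul (hM : M.IsHermitian) (hv : M *ᵥ v = c • v) :
    star v ᵥ* M = c • star v := by
  rw [← hM.eq, ← star_mulVec, hv, star_smul, star_trivial]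

theorem IsHermitian.dotProduct_mul_mul_mulVec_of_mulVec_eq_smul (hM : M.IsHermitian)
    (hv : M *ᵥ v = c • v) : star v ⬝ᵥ (M * A * M) *ᵥ v = (c : ℂ) ^ 2 * (star v ⬝ᵥ A *ᵥ v) := by
  rw [Matrix.mul_assoc, ← mulVec_mulVec, dotProduct_mulVec, hM.star_vecMul_of_mulVec_eq_smul hv,
    smul_dotProduct, dotProduct_mul_mulVec_of_mulVec_eq_smul hv,
    Complex.real_smul]
  ring

theorem IsHermitian.sqrt_re_mul_sqrt_re_of_mulVec_eq_smul (hA : A.PosSemidef)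
    (hM : M.IsHermitian) (hc : 0 ≤ c) (hv : M *ᵥ v = c • v) :
    √(star v ⬝ᵥ (M * A * M) *ᵥ v).re * √(star v ⬝ᵥ A *ᵥ v).re
      = (star v ⬝ᵥ (A * M) *ᵥ v).re := by
  have hAv : 0 ≤ (star v ⬝ᵥ A *ᵥ v).re := hA.re_dotProduct_nonneg v
  rw [hM.dotProduct_mul_mul_mulVec_of_mulVec_eq_smul hv,
    dotProduct_mul_mulVec_of_mulVec_eq_smul hv, ← Complex.ofReal_pow, Complex.re_ofReal_mul,
    Complex.re_ofReal_mul, Real.sqrt_mul (sq_nonneg c), Real.sqrt_sq hc, mul_assoc,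
    Real.mul_self_sqrt hAv]

end Eigenvector

end Matrix

theorem exists_orthonormal_basis_achieving_fidelity_general {D : ℕ}
    (ρ0 ρ1 : Matrix (Fin D) (Fin D) ℂ)
    (hρ0 : ρ0.PosDef) (hρ1 : ρ1.PosDef) :
    ∃ v : Fin D → (Fin D → ℂ),
      (∀ b c, star (v b) ⬝ᵥ v c = if b = c then 1 else 0) ∧
      ∑ b, Real.sqrt ((star (v b) ⬝ᵥ ρ0 *ᵥ v b).re) * Real.sqrt ((star (v b) ⬝ᵥ ρ1 *ᵥ v b).re)
        = ((sandwichPosSemidef hρ0.posSemidef hρ1.posSemidef).sqrt).trace.re := by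
  obtain ⟨M, hM, hMρ1M, htrace⟩ :=
    hρ1.exists_posSemidef_mul_mul_eq (sandwichPosSemidef hρ0.posSemidef hρ1.posSemidef)
  let e := hM.isHermitian.eigenvectorBasis
  refine ⟨fun b => (e b).ofLp, e.star_dotProduct_eq_ite, ?_⟩
  calc ∑ b, √(star (e b).ofLp ⬝ᵥ ρ0 *ᵥ (e b).ofLp).re * √(star (e b).ofLp ⬝ᵥ ρ1 *ᵥ (e b).ofLp).re
      = ∑ b, (star (e b).ofLp ⬝ᵥ (ρ1 * M) *ᵥ (e b).ofLp).re := by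
        refine Finset.sum_congr rfl fun b _ => ?_
        rw [← hMρ1M]
        exact hM.isHermitian.sqrt_re_mul_sqrt_re_of_mulVec_eq_smul hρ1.posSemidef
          (hM.eigenvalues_nonneg b) (hM.isHermitian.mulVec_eigenvectorBasis b)
    _ = _ := by rw [← Complex.re_sum, e.sum_star_dotProduct_mulVec, htrace]

/-- For positive definite density matrices, the fidelity lower bound on the statistical
overlap is achieved by an orthogonal projection-valued measurement, i.e. there is an
orthonormal basis `v_1, …, v_D` of `ℂ^D` on which the statistical overlap equals
`tr √(ρ1^{1/2} ρ0 ρ1^{1/2})`. -/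
theorem exists_orthonormal_basis_achieving_fidelity {D : ℕ}
    (ρ0 ρ1 : Matrix (Fin D) (Fin D) ℂ)
    (hρ0 : ρ0.PosDef) (hρ1 : ρ1.PosDef)
    (hρ0t : ρ0.trace = 1) (hρ1t : ρ1.trace = 1) :
    ∃ v : Fin D → (Fin D → ℂ),
      (∀ b c, star (v b) ⬝ᵥ v c = if b = c then 1 else 0) ∧
      ∑ b, Real.sqrt ((star (v b) ⬝ᵥ ρ0 *ᵥ v b).re) * Real.sqrt ((star (v b) ⬝ᵥ ρ1 *ᵥ v b).re)
        = ((sandwichPosSemidef hρ0.posSemidef hρ1.posSemidef).sqrt).trace.re :=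
  exists_orthonormal_basis_achieving_fidelity_general ρ0 ρ1 hρ0 hρ1
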